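/- For every natural number k there exists a constant C > 0, depending only on k, with the following property: for every nondegenerate triangle τ ⊂ ℝ² with barycentric coordinate functions λ₁, λ₂, λ₃ and element bubble function ψ_τ = 27·λ₁·λ₂·λ₃, and for every polynomial function v : ℝ² → ℝ of total degree at most k, one has ∫_τ ψ_τ v² dx ≤ ∫_τ v² dx ≤ C ∫_τ ψ_τ v² dx, where the integrals are taken with respect to two-dimensional Lebesgue measure restricted to τ. Equivalently, ‖v‖_{0,τ} ≤ C‖ψ_τ^{1/2} v‖_{0,τ} ≤ C‖v‖_{0,τ}. -/

import Mathlib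

open MeasureTheory Set MvPolynomial

/-!
Every triangle is the image of one fixed reference triangle `K` under an affine map `T`. The
barycentric coordinates of `T '' K` pull back to those of `K`, a polynomial of degree `≤ k`
pulls back to one of degree `≤ k`, and both integrals pick up the same Jacobian `|det T|`. So it
suffices to prove the estimate on `K`, where it compares two quadratic forms on the
finite-dimensional space of polynomials of degree `≤ k`. The weighted one is positive definite:
`ψ > 0` on the interior of `K`, which is dense in `K`, so a polynomial that does not vanish on
`K` makes `∫ ψ v²` positive. By compactness of the unit sphere the ratio of the two forms is then
bounded. The other inequality is `ψ ≤ 1`, which is AM-GM for the three barycentric coordinates.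
-/

namespace MvPolynomial

theorem totalDegree_bind₁_le {σ τ R : Type*} [CommSemiring R] (g : σ → MvPolynomial τ R)
    {n : ℕ} (hg : ∀ i, (g i).totalDegree ≤ n) (p : MvPolynomial σ R) :
    (bind₁ g p).totalDegree ≤ n * p.totalDegree := by
  conv_lhs => rw [p.as_sum, map_sum]
  refine totalDegree_finsetSum_le fun d hd => ?_
  rw [bind₁_monomial]
  calc (C (coeff d p) * ∏ i ∈ d.support, g i ^ d i).totalDegree
      ≤ ∑ i ∈ d.support, d i * n := by
        refine (totalDegree_mul _ _).trans ?_
        rw [totalDegree_C, zero_add]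
        exact (totalDegree_finsetProd _ _).trans <| Finset.sum_le_sum fun i _ =>
          (totalDegree_pow _ _).trans (Nat.mul_le_mul_left _ (hg i))
    _ = n * d.sum fun _ e => e := by rw [← Finset.sum_mul, mul_comm, Finsupp.sum]
    _ ≤ n * p.totalDegree := Nat.mul_le_mul_left _ (le_totalDegree hd)

theorem eval_bind₁ {σ τ R : Type*} [CommSemiring R] (x : τ → R) (g : σ → MvPolynomial τ R)
    (p : MvPolynomial σ R) : eval x (bind₁ g p) = eval (fun i => eval x (g i)) p :=
  eval₂Hom_bind₁ _ _ _ _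

theorem continuous_eval_ofLp {ι : Type*} [Fintype ι] (p : MvPolynomial ι ℝ) :
    Continuous fun x : EuclideanSpace ℝ ι => eval (fun i => x i) p :=
  p.continuous_eval.comp (PiLp.continuous_ofLp 2 _)

end MvPolynomial

theorem AffineMap.exists_totalDegree_le_one_eval_eq {ι : Type*} [Fintype ι]
    (f : EuclideanSpace ℝ ι →ᵃ[ℝ] ℝ) :
    ∃ q : MvPolynomial ι ℝ, q.totalDegree ≤ 1 ∧ ∀ x, eval (fun i => x i) q = f x := by
  refine ⟨C (f 0) + ∑ i, C (f.linear (EuclideanSpace.basisFun ι ℝ i)) * X i, ?_, fun x => ?_⟩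
  · refine (totalDegree_add _ _).trans (max_le (by simp) (totalDegree_finsetSum_le fun i _ => ?_))
    exact (totalDegree_mul _ _).trans (by simp [totalDegree_X])
  · conv_rhs => rw [← vsub_vadd x 0, f.map_vadd, ← (EuclideanSpace.basisFun ι ℝ).sum_repr x]
    simp [mul_comm, add_comm]

theorem AffineMap.exists_eval_comp_eq {ι ι' : Type*} [Fintype ι] [Fintype ι']
    (T : EuclideanSpace ℝ ι →ᵃ[ℝ] EuclideanSpace ℝ ι') (p : MvPolynomial ι' ℝ) :
    ∃ q : MvPolynomial ι ℝ, q.totalDegree ≤ p.totalDegree ∧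
      ∀ x, eval (fun i => x i) q = eval (fun j => T x j) p := by
  choose g hg₁ hg using fun j =>
    ((EuclideanSpace.proj j : EuclideanSpace ℝ ι' →L[ℝ] ℝ).toAffineMap.comp
      T).exists_totalDegree_le_one_eval_eq
  refine ⟨bind₁ g p, (totalDegree_bind₁_le g hg₁ p).trans_eq (one_mul _), fun x => ?_⟩
  simp [eval_bind₁, hg]

theorem exists_le_mul_of_homogeneous {V : Type*} [NormedAddCommGroup V] [NormedSpace ℝ V]
    [FiniteDimensional ℝ V] {q₁ q₂ : V → ℝ} (hq₁ : Continuous q₁) (hq₂ : Continuous q₂)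
    (hom₁ : ∀ (c : ℝ) v, q₁ (c • v) = c ^ 2 * q₁ v)
    (hom₂ : ∀ (c : ℝ) v, q₂ (c • v) = c ^ 2 * q₂ v)
    (hpos : ∀ v, v ≠ 0 → 0 < q₁ v) : ∃ C, 0 < C ∧ ∀ v, q₂ v ≤ C * q₁ v := by
  have hS : ∀ u ∈ Metric.sphere (0 : V) 1, 0 < q₁ u := fun u hu =>
    hpos u (ne_zero_of_mem_unit_sphere ⟨u, hu⟩)
  obtain ⟨B, hB⟩ := ((isCompact_sphere (0 : V) 1).image_of_continuousOn
    (hq₂.continuousOn.div hq₁.continuousOn fun u hu => (hS u hu).ne')).bddAbove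
  refine ⟨max B 1, by positivity, fun v => ?_⟩
  rcases eq_or_ne v 0 with rfl | hv
  · have h₁ : q₁ 0 = 0 := by simpa using hom₁ 0 0
    have h₂ : q₂ 0 = 0 := by simpa using hom₂ 0 0
    rw [h₁, h₂, mul_zero]
  · set u := ‖v‖⁻¹ • v
    have hu : u ∈ Metric.sphere (0 : V) 1 := by
      simp [u, norm_smul, inv_mul_cancel₀ (norm_ne_zero_iff.mpr hv)]
    have hqu : q₂ u ≤ max B 1 * q₁ u := by
      rw [← div_le_iff₀ (hS u hu)]
      exact (hB ⟨u, hu, rfl⟩).trans (le_max_left _ _)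
    have hv' : v = ‖v‖ • u := by
      simp [u, smul_smul, mul_inv_cancel₀ (norm_ne_zero_iff.mpr hv)]
    rw [hv', hom₁, hom₂]
    nlinarith [sq_nonneg ‖v‖]

theorem ContinuousMap.continuous_integral {X : Type*} [TopologicalSpace X] [CompactSpace X]
    [MeasurableSpace X] [BorelSpace X] (μ : Measure X) [IsFiniteMeasure μ] :
    Continuous fun f : C(X, ℝ) => ∫ x, f x ∂μ := by
  have : (fun f : C(X, ℝ) => ∫ x, f x ∂μ) = fun f => ∫ x, toLp 1 μ ℝ f x ∂μ := by
    ext f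
    exact integral_congr_ae (ContinuousMap.coeFn_toLp (p := 1) μ f).symm
  rw [this]
  exact MeasureTheory.continuous_integral.comp (toLp 1 μ ℝ).continuous

theorem ContinuousMap.exists_integral_sq_le_mul_integral_mul_sq {X : Type*} [TopologicalSpace X]
    [CompactSpace X] [MeasurableSpace X] [BorelSpace X] (μ : Measure X) [IsFiniteMeasure μ]
    (W : Submodule ℝ C(X, ℝ)) [FiniteDimensional ℝ W] (w : C(X, ℝ))
    (hpos : ∀ f ∈ W, f ≠ 0 → 0 < ∫ x, w x * f x ^ 2 ∂μ) :
    ∃ C, 0 < C ∧ ∀ f ∈ W, ∫ x, f x ^ 2 ∂μ ≤ C * ∫ x, w x * f x ^ 2 ∂μ := by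
  have hom : ∀ (g : C(X, ℝ)) (c : ℝ) (f : C(X, ℝ)),
      ∫ x, g x * (c • f) x ^ 2 ∂μ = c ^ 2 * ∫ x, g x * f x ^ 2 ∂μ := fun g c f => by
    rw [← integral_const_mul]
    congr 1 with x
    simp only [ContinuousMap.coe_smul, Pi.smul_apply, smul_eq_mul]
    ring
  have hcont : ∀ g : C(X, ℝ), Continuous fun f : W => ∫ x, g x * (f : C(X, ℝ)) x ^ 2 ∂μ :=
    fun g => (ContinuousMap.continuous_integral μ).comp
      (continuous_const.mul (continuous_subtype_val.pow 2))
  obtain ⟨C, hC, hle⟩ := exists_le_mul_of_homogeneous (hcont w) (hcont 1)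
    (fun c f => hom w c f) (fun c f => hom 1 c f)
    (fun f hf => hpos f f.2 (by simpa using hf))
  exact ⟨C, hC, fun f hf => by simpa using hle ⟨f, hf⟩⟩

theorem setIntegral_mul_sq_pos {E : Type*} [TopologicalSpace E] [T2Space E] [MeasurableSpace E]
    [OpensMeasurableSpace E] {μ : Measure E} [IsFiniteMeasureOnCompacts μ] [μ.IsOpenPosMeasure]
    {K : Set E} (hK : IsCompact K) (hKi : K ⊆ closure (interior K)) {w v : E → ℝ}
    (hw : Continuous w) (hw₀ : ∀ x ∈ K, 0 ≤ w x) (hwpos : ∀ x ∈ interior K, 0 < w x)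
    (hv : Continuous v) (hvK : ∃ x ∈ K, v x ≠ 0) : 0 < ∫ x in K, w x * v x ^ 2 ∂μ := by
  obtain ⟨x, hxK, hx⟩ := hvK
  obtain ⟨y, hyv, hyK⟩ : (v ⁻¹' {0}ᶜ ∩ interior K).Nonempty :=
    mem_closure_iff.mp (hKi hxK) _ (isOpen_compl_singleton.preimage hv) hx
  have hg : Continuous fun x => w x * v x ^ 2 := hw.mul (hv.pow 2)
  rw [setIntegral_pos_iff_support_of_nonneg_ae
    (ae_restrict_of_forall_mem hK.measurableSet fun x hx => mul_nonneg (hw₀ x hx) (sq_nonneg _))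
    (hg.continuousOn.integrableOn_compact hK)]
  refine (IsOpen.measure_pos μ (hg.isOpen_support.inter isOpen_interior) ⟨y, ?_, hyK⟩).trans_le
    (measure_mono (inter_subset_inter_right _ interior_subset))
  exact mul_ne_zero (hwpos y hyK).ne' (pow_ne_zero 2 hyv)

theorem setIntegral_mul_sq_le_of_le_one {E : Type*} [TopologicalSpace E] [T2Space E]
    [MeasurableSpace E] [OpensMeasurableSpace E] {μ : Measure E} [IsFiniteMeasureOnCompacts μ]
    {K : Set E} (hK : IsCompact K) {w v : E → ℝ} (hw : Continuous w) (hv : Continuous v)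
    (hw₁ : ∀ x ∈ K, w x ≤ 1) : ∫ x in K, w x * v x ^ 2 ∂μ ≤ ∫ x in K, v x ^ 2 ∂μ :=
  setIntegral_mono_on ((hw.mul (hv.pow 2)).continuousOn.integrableOn_compact hK)
    ((hv.pow 2).continuousOn.integrableOn_compact hK) hK.measurableSet fun x hx =>
      mul_le_of_le_one_left (sq_nonneg _) (hw₁ x hx)

theorem exists_setIntegral_sq_le_mul_setIntegral_mul_sq {ι : Type*} [Fintype ι]
    {μ : Measure (EuclideanSpace ℝ ι)} [IsFiniteMeasureOnCompacts μ] [μ.IsOpenPosMeasure]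
    {K : Set (EuclideanSpace ℝ ι)} (hK : IsCompact K) (hKi : K ⊆ closure (interior K))
    {w : EuclideanSpace ℝ ι → ℝ} (hw : Continuous w) (hw₀ : ∀ x ∈ K, 0 ≤ w x)
    (hwpos : ∀ x ∈ interior K, 0 < w x) (k : ℕ) :
    ∃ C, 0 < C ∧ ∀ p : MvPolynomial ι ℝ, p.totalDegree ≤ k →
      ∫ x in K, eval (fun i => x i) p ^ 2 ∂μ ≤
        C * ∫ x in K, w x * eval (fun i => x i) p ^ 2 ∂μ := by
  have : CompactSpace K := isCompact_iff_compactSpace.mp hK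
  have : IsFiniteMeasure (μ.comap ((↑) : K → EuclideanSpace ℝ ι)) := ⟨by
    rw [comap_subtype_coe_apply hK.measurableSet]
    exact (measure_mono (image_subset_iff.mpr fun x _ => x.2)).trans_lt hK.measure_lt_top⟩
  let evalOn : restrictTotalDegree ι ℝ k →ₗ[ℝ] C(K, ℝ) :=
    { toFun p := ⟨fun x => eval (fun i => (x : EuclideanSpace ℝ ι) i) p,
        (continuous_eval_ofLp p.1).comp continuous_subtype_val⟩
      map_add' p q := by ext; simp
      map_smul' c p := by ext; simp }
  have hcomap (g : EuclideanSpace ℝ ι → ℝ) : ∫ x : K, g x ∂(μ.comap (↑)) = ∫ x in K, g x ∂μ :=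
    integral_subtype_comap hK.measurableSet g
  obtain ⟨C, hC, hle⟩ := ContinuousMap.exists_integral_sq_le_mul_integral_mul_sq
    (μ.comap ((↑) : K → EuclideanSpace ℝ ι)) (LinearMap.range evalOn)
    ⟨fun x => w x, hw.comp continuous_subtype_val⟩ (by
      rintro _ ⟨p, rfl⟩ hp
      refine (setIntegral_mul_sq_pos hK hKi hw hw₀ hwpos (continuous_eval_ofLp p.1)
        ?_).trans_eq (hcomap _).symm
      by_contra! h
      exact hp (ContinuousMap.ext fun x => h x x.2))
  refine ⟨C, hC, fun p hp => ?_⟩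
  rw [← hcomap, ← hcomap]
  exact hle (evalOn ⟨p, (mem_restrictTotalDegree _ _ _).mpr hp⟩) (LinearMap.mem_range_self _ _)

def triangleBubble {E : Type*} [AddCommGroup E] [Module ℝ E] (L : Fin 3 → E →ᵃ[ℝ] ℝ) (x : E) :
    ℝ :=
  27 * L 0 x * L 1 x * L 2 x

namespace AffineBasis

section Constr

variable {ι k V P V' P' : Type*} [Fintype ι] [Ring k] [AddCommGroup V] [Module k V]
  [AddTorsor V P] [AddCommGroup V'] [Module k V'] [AddTorsor V' P'] (b : AffineBasis ι k P)

noncomputable def constr (a : ι → P') : P →ᵃ[k] P' :=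
  (Finset.univ.affineCombination k a).comp b.coords

@[simp]
theorem constr_apply_self (a : ι → P') (j : ι) : b.constr a (b j) = a j :=
  Finset.univ.affineCombination_of_eq_one_of_eq_zero _ _ (Finset.mem_univ j)
    (by simp [coords_apply]) fun i _ hij => by simp [coords_apply, b.coord_apply_ne hij]

variable [DecidableEq ι]

theorem comp_constr_eq_coord {a : ι → P'} {L : ι → P' →ᵃ[k] k}
    (hL : ∀ i j, L i (a j) = if i = j then 1 else 0) (i : ι) :
    (L i).comp (b.constr a) = b.coord i :=
  AffineMap.ext_on b.tot <| by
    rintro _ ⟨j, rfl⟩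
    simp [hL, b.coord_apply]

theorem constr_injective {a : ι → P'} {L : ι → P' →ᵃ[k] k}
    (hL : ∀ i j, L i (a j) = if i = j then 1 else 0) : Function.Injective (b.constr a) :=
  fun x y hxy => b.ext_elem fun i => by
    rw [← b.comp_constr_eq_coord hL, AffineMap.comp_apply, AffineMap.comp_apply, hxy]

end Constr

theorem image_constr_convexHull {ι E F : Type*} [Fintype ι] [DecidableEq ι] [AddCommGroup E]
    [Module ℝ E] [AddCommGroup F] [Module ℝ F] (b : AffineBasis ι ℝ E) (a : ι → F) :
    b.constr a '' convexHull ℝ (range b) = convexHull ℝ (range a) := by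
  rw [AffineMap.image_convexHull, ← range_comp]
  congr
  ext j
  simp

section Bubble

variable {E : Type*} [NormedAddCommGroup E] [NormedSpace ℝ E] (b : AffineBasis (Fin 3) ℝ E)

theorem triangleBubble_nonneg_le_one {x : E} (hx : x ∈ convexHull ℝ (range b)) :
    0 ≤ triangleBubble b.coord x ∧ triangleBubble b.coord x ≤ 1 := by
  rw [b.convexHull_eq_nonneg_coord] at hx
  have hsum := b.sum_coord_apply_eq_one x
  simp only [Fin.sum_univ_three] at hsum
  have h₀ := hx 0
  have h₁ := hx 1
  have h₂ := hx 2
  unfold triangleBubble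
  constructor
  · positivity
  · nlinarith [mul_nonneg h₀ h₁, mul_nonneg h₁ h₂, mul_nonneg h₀ h₂,
      sq_nonneg (b.coord 0 x - b.coord 1 x), sq_nonneg (b.coord 1 x - b.coord 2 x),
      sq_nonneg (b.coord 0 x - b.coord 2 x)]

theorem triangleBubble_pos {x : E} (hx : x ∈ interior (convexHull ℝ (range b))) :
    0 < triangleBubble b.coord x := by
  rw [b.interior_convexHull] at hx
  have h₀ := hx 0
  have h₁ := hx 1
  have h₂ := hx 2
  unfold triangleBubble
  positivity

variable [FiniteDimensional ℝ E]

theorem continuous_triangleBubble : Continuous (triangleBubble b.coord) := by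
  have h := fun i => (b.coord i).continuous_of_finiteDimensional
  unfold triangleBubble
  fun_prop

end Bubble

theorem convexHull_subset_closure_interior {ι E : Type*} [Fintype ι] [NormedAddCommGroup E]
    [NormedSpace ℝ E] (b : AffineBasis ι ℝ E) :
    convexHull ℝ (range b) ⊆ closure (interior (convexHull ℝ (range b))) := by
  rw [(convex_convexHull ℝ _).closure_interior_eq_closure_of_nonempty_interior
    ⟨_, b.centroid_mem_interior_convexHull⟩]
  exact subset_closure

end AffineBasis

theorem AffineMap.setIntegral_image {E F : Type*} [NormedAddCommGroup E] [NormedSpace ℝ E]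
    [FiniteDimensional ℝ E] [MeasurableSpace E] [BorelSpace E] [NormedAddCommGroup F]
    [NormedSpace ℝ F] (μ : Measure E) [μ.IsAddHaarMeasure] (T : E →ᵃ[ℝ] E)
    (hT : Function.Injective T) {s : Set E} (hs : MeasurableSet s) (g : E → F) :
    ∫ x in T '' s, g x ∂μ = |LinearMap.det T.linear| • ∫ x in s, g (T x) ∂μ := by
  have hT' : ∀ x ∈ s, HasFDerivWithinAt T T.linear.toContinuousLinearMap s x := fun x _ => by
    rw [T.decomp]
    exact (T.linear.toContinuousLinearMap.hasFDerivAt.add_const (T 0)).hasFDerivWithinAt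
  rw [integral_image_eq_integral_abs_det_fderiv_smul μ hs hT' hT.injOn, integral_smul]
  rfl

/-- Element bubble function estimate (4.1): there is `C > 0` depending only on the
polynomial degree `k` such that for every nondegenerate triangle
`τ = convexHull {a 0, a 1, a 2}` in `ℝ²` with barycentric coordinate functions
`L 0, L 1, L 2`, element bubble `ψ_τ = 27 (L 0)(L 1)(L 2)`, and every polynomial `v`
of total degree at most `k`,
`∫_τ ψ_τ v² ≤ ∫_τ v² ≤ C ∫_τ ψ_τ v²`. -/
theorem element_bubble_norm_equivalence (k : ℕ) :
    ∃ C : ℝ, 0 < C ∧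
      ∀ (a : Fin 3 → EuclideanSpace ℝ (Fin 2)), AffineIndependent ℝ a →
      ∀ (L : Fin 3 → (EuclideanSpace ℝ (Fin 2) →ᵃ[ℝ] ℝ)),
        (∀ i j, L i (a j) = if i = j then 1 else 0) →
      ∀ (p : MvPolynomial (Fin 2) ℝ), p.totalDegree ≤ k →
        letI τ : Set (EuclideanSpace ℝ (Fin 2)) := convexHull ℝ (Set.range a)
        letI ψ : EuclideanSpace ℝ (Fin 2) → ℝ := fun x => 27 * L 0 x * L 1 x * L 2 x
        letI v : EuclideanSpace ℝ (Fin 2) → ℝ := fun x => MvPolynomial.eval (fun i => x i) p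
        (∫ x in τ, ψ x * v x ^ 2) ≤ (∫ x in τ, v x ^ 2) ∧
        (∫ x in τ, v x ^ 2) ≤ C * ∫ x in τ, ψ x * v x ^ 2 := by
  obtain ⟨b⟩ : Nonempty (AffineBasis (Fin 3) ℝ (EuclideanSpace ℝ (Fin 2))) :=
    AffineBasis.exists_affineBasis_of_finiteDimensional (by simp)
  have hK : IsCompact (convexHull ℝ (range b)) := (finite_range b).isCompact_convexHull ℝ
  obtain ⟨C, hC, hbound⟩ := exists_setIntegral_sq_le_mul_setIntegral_mul_sq (μ := volume) hK
    b.convexHull_subset_closure_interior b.continuous_triangleBubble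
    (fun x hx => (b.triangleBubble_nonneg_le_one hx).1) (fun _ => b.triangleBubble_pos) k
  refine ⟨C, hC, fun a _ L hL p hp => ?_⟩
  obtain ⟨q, hq, hqp⟩ := (b.constr a).exists_eval_comp_eq p
  have hψ (x) : triangleBubble L (b.constr a x) = triangleBubble b.coord x := by
    simp only [triangleBubble, ← AffineMap.comp_apply, b.comp_constr_eq_coord hL]
  have hcov (g : EuclideanSpace ℝ (Fin 2) → ℝ) := AffineMap.setIntegral_image volume _
    (b.constr_injective hL) hK.measurableSet g
  change (∫ x in _, triangleBubble L x * _) ≤ _ ∧ _ ≤ C * ∫ x in _, triangleBubble L x * _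
  simp only [← b.image_constr_convexHull a, hcov, hψ, ← hqp, smul_eq_mul]
  constructor
  · refine mul_le_mul_of_nonneg_left ?_ (abs_nonneg _)
    exact setIntegral_mul_sq_le_of_le_one hK b.continuous_triangleBubble q.continuous_eval_ofLp
      fun x hx => (b.triangleBubble_nonneg_le_one hx).2
  · rw [mul_left_comm]
    gcongr
    exact hbound q (hq.trans hp)
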